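/- For every sufficiently small α > 0 there exists n0 ∈ ℕ such that the following holds for all n ≥ n0 with n ≡ 0 (mod 3). Let H be a 4-partite 4-graph with vertex classes V1, V2, V3, V4, each of size n, on the same vertex set as H'_{1,3}(n) (for a fixed choice of the partition sets Wi ⊆ Vi, i = 2, 3, 4). If every vertex of H is α-good with respect to H'_{1,3}(n), then H has a perfect matching. -/

import Mathlib

open Finset

/-- `E` is the edge set of a 4-partite 4-graph with classes `V1, V2, V3, V4`. -/
def IsPartite4 {α : Type} [DecidableEq α] (V1 V2 V3 V4 : Finset α)
    (E : Finset (Finset α)) : Prop :=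
  ∀ e ∈ E, e ⊆ V1 ∪ V2 ∪ V3 ∪ V4 ∧ (e ∩ V1).card = 1 ∧ (e ∩ V2).card = 1 ∧
    (e ∩ V3).card = 1 ∧ (e ∩ V4).card = 1

/-- The edge set of `H'₁,₃(n)` for the choice `W2, W3, W4` of the partition
sets: all quadruples with one vertex in each class that meet `W2 ∪ W3 ∪ W4`
and meet `(V2 \ W2) ∪ (V3 \ W3) ∪ (V4 \ W4)`. -/
def H13edges {α : Type} [DecidableEq α] (V1 V2 V3 V4 W2 W3 W4 : Finset α) :
    Finset (Finset α) :=
  (V1 ∪ V2 ∪ V3 ∪ V4).powerset.filter (fun e =>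
    (e ∩ V1).card = 1 ∧ (e ∩ V2).card = 1 ∧ (e ∩ V3).card = 1 ∧
    (e ∩ V4).card = 1 ∧ (e ∩ (W2 ∪ W3 ∪ W4)).Nonempty ∧
    (e ∩ ((V2 \ W2) ∪ (V3 \ W3) ∪ (V4 \ W4))).Nonempty)

/-- The neighbourhood of a vertex `v` in a 4-graph with vertex set `V` and edge
set `E`: the 3-element sets `T ⊆ V` with `T ∪ {v} ∈ E`. -/
def nbrs {α : Type} [DecidableEq α] (V : Finset α) (E : Finset (Finset α))
    (v : α) : Finset (Finset α) :=
  V.powerset.filter (fun T => T.card = 3 ∧ insert v T ∈ E)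

/-! Partition each class `Vi` into three parts of size `m`, so that `W2`, `W3`, `W4` are the
parts number `0`, `1`, `2` of their classes. For each `k`, the `k`-th parts of the four classes
span a complete 4-partite 4-graph contained in `H'₁,₃`, since one of them is `W (k + 2)` and
another lies in some `Vi \ Wi`. Inside such a block every vertex of `H` misses at most
`27 a m³ < m³ / 1000` edges.

Such a nearly complete balanced 4-partite 4-graph has a perfect matching. If a matching `M`
leaves a transversal `x` uncovered and no edge lies on the uncovered vertices, then the
uncovered part is small and `M` covers nine tenths of each class. Counting then yields three
edges `e, f, g ∈ M` such that the four rows of the Latin square on `x, e, f, g` are edges of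
`H`; replacing `e, f, g` by them enlarges `M`. -/

open Function

namespace PartiteHypergraph

section PartiteMatching

variable {ι α : Type*} [Fintype ι] [DecidableEq ι]

/-- A matching of the `ι`-partite hypergraph with classes `X` and edge predicate `R`, each edge
recorded as the tuple of its vertices, one per class. -/
def IsPartiteMatching (X : ι → Finset α) (R : (ι → α) → Prop)
    (M : Finset (ι → α)) : Prop :=
  (∀ t ∈ M, t ∈ Fintype.piFinset X ∧ R t) ∧ ∀ i, Set.InjOn (· i) (M : Set (ι → α))

def missingLink [DecidableEq α] (X : ι → Finset α) (R : (ι → α) → Prop) [DecidablePred R]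
    (i : ι) (v : α) : Finset (ι → α) :=
  {t ∈ Fintype.piFinset X | t i = v ∧ ¬ R t}

variable [DecidableEq α] {X : ι → Finset α} {R : (ι → α) → Prop} {M : Finset (ι → α)}

lemma IsPartiteMatching.card_sdiff_image (hMX : IsPartiteMatching X R M) (i : ι) :
    #(X i \ M.image (· i)) = #(X i) - #M := by
  have hsub : M.image (· i) ⊆ X i := fun v hv => by
    obtain ⟨t, ht, rfl⟩ := mem_image.1 hv
    exact Fintype.mem_piFinset.1 (hMX.1 t ht).1 i
  rw [card_sdiff_of_subset hsub, card_image_of_injOn (hMX.2 i)]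

lemma isPartiteMatching_insert (hMX : IsPartiteMatching X R M) {x : ι → α}
    (hx : x ∈ Fintype.piFinset X) (hRx : R x) (hfree : ∀ t ∈ M, ∀ i, t i ≠ x i) :
    IsPartiteMatching X R (insert x M) := by
  refine ⟨fun t ht => ?_, fun i t ht t' ht' h => ?_⟩
  · rcases mem_insert.1 ht with rfl | ht
    · exact ⟨hx, hRx⟩
    · exact hMX.1 t ht
  · simp only [coe_insert, Set.mem_insert_iff, mem_coe] at ht ht'
    rcases ht with rfl | ht <;> rcases ht' with rfl | ht'
    · rfl
    · exact absurd h.symm (hfree _ ht' i)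
    · exact absurd h (hfree _ ht i)
    · exact hMX.2 i ht ht' h

end PartiteMatching

section LatinSwap

variable {ι α : Type*} [AddGroup ι] {M : Finset (ι → α)} {s : ι → ι → α}

lemma apply_injective_of_free (hM : ∀ i, Set.InjOn (· i) (M : Set (ι → α)))
    (hfree : ∀ t ∈ M, ∀ i, t i ≠ s 0 i) (hsM : ∀ g ≠ 0, s g ∈ M) (hs : Injective s) (i : ι) :
    Injective fun g => s g i := by
  intro g h hgh
  by_cases hg : g = 0 <;> by_cases hh : h = 0
  · rw [hg, hh]
  · exact absurd (hg ▸ hgh).symm (hfree _ (hsM h hh) i)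
  · exact absurd (hh ▸ hgh) (hfree _ (hsM g hg) i)
  · exact hs (hM i (hsM g hg) (hsM h hh) hgh)

variable [Fintype ι] [DecidableEq α]

/-- The new edges form a Latin square on the sources `s g`: coordinate `i` of edge `j` comes from
`s (j - i)`, so the uncovered tuple `s 0` lies on the diagonal. -/
def latinSwap (M : Finset (ι → α)) (s : ι → ι → α) : Finset (ι → α) :=
  (M \ univ.image s) ∪ univ.image fun j i => s (j - i) i

lemma apply_ne_of_mem_sdiff (hM : ∀ i, Set.InjOn (· i) (M : Set (ι → α)))
    (hfree : ∀ t ∈ M, ∀ i, t i ≠ s 0 i) (hsM : ∀ g ≠ 0, s g ∈ M) {t : ι → α}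
    (ht : t ∈ M \ univ.image s) (g i : ι) : t i ≠ s g i := by
  obtain ⟨htM, hts⟩ := mem_sdiff.1 ht
  by_cases hg : g = 0
  · exact hg ▸ hfree t htM i
  · exact fun h => hts (mem_image.2 ⟨g, mem_univ g, (hM i (hsM g hg) htM h.symm)⟩)

lemma latinSwap_injOn (hM : ∀ i, Set.InjOn (· i) (M : Set (ι → α)))
    (hfree : ∀ t ∈ M, ∀ i, t i ≠ s 0 i) (hsM : ∀ g ≠ 0, s g ∈ M) (hs : Injective s) (i : ι) :
    Set.InjOn (· i) (latinSwap M s : Set (ι → α)) := by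
  intro t ht t' ht' h
  simp only [latinSwap, coe_union, Set.mem_union, mem_coe, coe_image, coe_univ, Set.image_univ,
    Set.mem_range] at ht ht'
  rcases ht with ht | ⟨j, rfl⟩ <;> rcases ht' with ht' | ⟨j', rfl⟩
  · exact hM i (mem_sdiff.1 ht).1 (mem_sdiff.1 ht').1 h
  · exact absurd h (apply_ne_of_mem_sdiff hM hfree hsM ht _ i)
  · exact absurd h.symm (apply_ne_of_mem_sdiff hM hfree hsM ht' _ i)
  · rw [sub_left_injective (apply_injective_of_free hM hfree hsM hs i h)]

lemma card_latinSwap (hM : ∀ i, Set.InjOn (· i) (M : Set (ι → α)))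
    (hfree : ∀ t ∈ M, ∀ i, t i ≠ s 0 i) (hsM : ∀ g ≠ 0, s g ∈ M) (hs : Injective s) :
    #(latinSwap M s) = #M + 1 := by
  have hnew : #(univ.image fun j i => s (j - i) i) = Fintype.card ι := by
    refine card_image_of_injective _ fun j j' h => ?_
    have := apply_injective_of_free hM hfree hsM hs j (congrFun h j)
    rwa [sub_self, eq_comm, sub_eq_zero, eq_comm] at this
  have hold : univ.image s ∩ M = (univ.image s).erase (s 0) := by
    ext t
    simp only [mem_inter, mem_erase, mem_image, mem_univ, true_and]
    constructor
    · rintro ⟨⟨g, rfl⟩, hg⟩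
      exact ⟨fun h => hfree _ hg 0 (congrFun h 0), g, rfl⟩
    · rintro ⟨hne, g, rfl⟩
      exact ⟨⟨g, rfl⟩, hsM g fun hg => hne (hg ▸ rfl)⟩
  have hdisj : Disjoint (M \ univ.image s) (univ.image fun j i => s (j - i) i) := by
    refine disjoint_right.2 fun t ht htM => ?_
    obtain ⟨j, -, rfl⟩ := mem_image.1 ht
    exact apply_ne_of_mem_sdiff hM hfree hsM htM 0 j (by simp)
  have hsub : #(univ.image s ∩ M) ≤ #M := card_le_card inter_subset_right
  have hcard : #(univ.image s ∩ M) + 1 = Fintype.card ι := by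
    rw [hold, card_erase_add_one (mem_image_of_mem s (mem_univ 0)),
      card_image_of_injective _ hs, card_univ]
  rw [latinSwap, card_union_of_disjoint hdisj, card_sdiff, hnew]
  omega

lemma isPartiteMatching_latinSwap [DecidableEq ι] {X : ι → Finset α} {R : (ι → α) → Prop}
    (hMX : IsPartiteMatching X R M) (hfree : ∀ t ∈ M, ∀ i, t i ≠ s 0 i)
    (hsM : ∀ g ≠ 0, s g ∈ M) (hs : Injective s) (hs0 : s 0 ∈ Fintype.piFinset X)
    (hR : ∀ j, R fun i => s (j - i) i) : IsPartiteMatching X R (latinSwap M s) := by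
  refine ⟨fun t ht => ?_, latinSwap_injOn hMX.2 hfree hsM hs⟩
  rcases mem_union.1 ht with ht | ht
  · exact hMX.1 t (mem_sdiff.1 ht).1
  · obtain ⟨j, -, rfl⟩ := mem_image.1 ht
    refine ⟨Fintype.mem_piFinset.2 fun i => ?_, hR j⟩
    by_cases hg : j - i = 0
    · exact Fintype.mem_piFinset.1 (hg ▸ hs0) i
    · exact Fintype.mem_piFinset.1 (hMX.1 _ (hsM _ hg)).1 i

end LatinSwap

section Sources

variable {ι α : Type*} [Fintype ι] [DecidableEq ι]

lemma card_filter_piFinset_apply_eq_mul_le [DecidableEq α] (t : ι → Finset α) {g h : ι}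
    (hgh : g ≠ h) :
    #{s ∈ Fintype.piFinset t | s g = s h} * #(t h) ≤ #(Fintype.piFinset t) := by
  rw [← card_product]
  refine card_le_card_of_injOn (fun p => update p.1 h p.2) (fun p hp => ?_) ?_
  · obtain ⟨hs, hb⟩ := mem_product.1 hp
    refine Fintype.mem_piFinset.2 fun i => ?_
    rcases eq_or_ne i h with rfl | hi
    · simpa using hb
    · simpa [hi] using Fintype.mem_piFinset.1 (mem_filter.1 hs).1 i
  · rintro ⟨s, b⟩ hp ⟨s', b'⟩ hp' heq
    have hs := (mem_filter.1 (mem_product.1 hp).1).2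
    have hs' := (mem_filter.1 (mem_product.1 hp').1).2
    have hb : b = b' := by simpa using congrFun heq h
    have hg : s g = s' g := by simpa [hgh] using congrFun heq g
    refine Prod.ext (funext fun i => ?_) hb
    rcases eq_or_ne i h with rfl | hi
    · exact hs.symm.trans (hg.trans hs')
    · simpa [hi] using congrFun heq i

variable [AddGroup ι]

def sources (M : Finset (ι → α)) (x : ι → α) : Finset (ι → ι → α) :=
  Fintype.piFinset fun g => if g = 0 then {x} else M

lemma mem_sources {M : Finset (ι → α)} {x : ι → α} {s : ι → ι → α} :
    s ∈ sources M x ↔ s 0 = x ∧ ∀ g ≠ 0, s g ∈ M := by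
  simp only [sources, Fintype.mem_piFinset]
  constructor
  · intro h
    exact ⟨by simpa using h 0, fun g hg => by simpa [hg] using h g⟩
  · rintro ⟨h0, hM⟩ g
    split_ifs with hg
    · simp [hg, h0]
    · exact hM g hg

variable [DecidableEq α] {R : (ι → α) → Prop} [DecidablePred R] {M : Finset (ι → α)}
  {x : ι → α}

lemma card_filter_sources_le_card_missingLink {X : ι → Finset α} (hMX : IsPartiteMatching X R M)
    (hx : x ∈ Fintype.piFinset X) (j : ι) :
    #{s ∈ sources M x | ¬ R fun i => s (j - i) i} ≤ #(missingLink X R j (x j)) := by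
  refine card_le_card_of_injOn (fun s i => s (j - i) i) (fun s hs => ?_) ?_
  · obtain ⟨hs, hR⟩ := mem_filter.1 hs
    obtain ⟨hs0, hsM⟩ := mem_sources.1 hs
    refine mem_filter.2 ⟨Fintype.mem_piFinset.2 fun i => ?_, by simp [hs0], hR⟩
    by_cases hg : j - i = 0
    · exact Fintype.mem_piFinset.1 (hg ▸ hs0 ▸ hx) i
    · exact Fintype.mem_piFinset.1 (hMX.1 _ (hsM _ hg)).1 i
  · intro s hs s' hs' heq
    obtain ⟨hs0, hsM⟩ := mem_sources.1 (mem_filter.1 hs).1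
    obtain ⟨hs0', hsM'⟩ := mem_sources.1 (mem_filter.1 hs').1
    funext g
    by_cases hg : g = 0
    · rw [hg, hs0, hs0']
    · have := congrFun heq (-g + j)
      simp only [sub_eq_add_neg, neg_add_rev, neg_neg, add_neg_cancel_left] at this
      exact hMX.2 (-g + j) (hsM g hg) (hsM' g hg) this

lemma card_sources_le_of_forall_not_latin
    (hno : ∀ s ∈ sources M x, Injective s → ∃ j, ¬ R fun i => s (j - i) i) :
    #(sources M x) ≤ ∑ p ∈ univ.offDiag with p.2 ≠ 0, #{s ∈ sources M x | s p.1 = s p.2} +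
      ∑ j, #{s ∈ sources M x | ¬ R fun i => s (j - i) i} := by
  refine (card_le_card fun s hs => ?_).trans ((card_union_le _ _).trans
    (add_le_add card_biUnion_le card_biUnion_le))
  rw [mem_union, mem_biUnion, mem_biUnion]
  by_cases hinj : Injective s
  · obtain ⟨j, hj⟩ := hno s hs hinj
    exact Or.inr ⟨j, mem_univ j, mem_filter.2 ⟨hs, hj⟩⟩
  · obtain ⟨g, h, hgh, hne⟩ := not_injective_iff.1 hinj
    left
    by_cases h0 : h = 0
    · subst h0
      exact ⟨(0, g), mem_filter.2 ⟨mem_offDiag.2 ⟨mem_univ _, mem_univ _, hne.symm⟩, hne⟩,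
        mem_filter.2 ⟨hs, hgh.symm⟩⟩
    · exact ⟨(g, h), mem_filter.2 ⟨mem_offDiag.2 ⟨mem_univ _, mem_univ _, hne⟩, h0⟩,
        mem_filter.2 ⟨hs, hgh⟩⟩

end Sources

section Augmentation

variable {α : Type*} [DecidableEq α] {X : Fin 4 → Finset α} {R : (Fin 4 → α) → Prop}
  [DecidablePred R] {M : Finset (Fin 4 → α)} {m : ℕ}

lemma exists_latin_sources (hMX : IsPartiteMatching X R M) {x : Fin 4 → α}
    (hx : x ∈ Fintype.piFinset X)
    (hdeg : ∀ i, ∀ v ∈ X i, 1000 * #(missingLink X R i v) ≤ m ^ 3)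
    (hk : 9 * m ≤ 10 * #M) (hm : 100 ≤ m) :
    ∃ s ∈ sources M x, Injective s ∧ ∀ j, R fun i => s (j - i) i := by
  by_contra! hno
  have hC : #(sources M x) = #M ^ 3 := by
    simp [sources, Fintype.card_piFinset, Fin.prod_univ_four]
    ring
  have hkpos : 0 < #M := by omega
  have hdiag : ∀ p ∈ (univ.offDiag.filter fun p : Fin 4 × Fin 4 => p.2 ≠ 0),
      #{s ∈ sources M x | s p.1 = s p.2} ≤ #M ^ 2 := by
    intro p hp
    obtain ⟨hne, h0⟩ := by simpa using hp
    have := card_filter_piFinset_apply_eq_mul_le (fun g => if g = 0 then {x} else M) hne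
    rw [if_neg h0, ← sources, hC, pow_succ] at this
    exact le_of_mul_le_mul_right this hkpos
  have hbad : ∀ j, 1000 * #{s ∈ sources M x | ¬ R fun i => s (j - i) i} ≤ m ^ 3 := fun j =>
    (Nat.mul_le_mul_left _ (card_filter_sources_le_card_missingLink hMX hx j)).trans
      (hdeg j (x j) (Fintype.mem_piFinset.1 hx j))
  -- With `k = #M`: of the `k³` sources at most `9 k²` repeat an edge and at most `4 m³ / 1000`
  -- produce a non-edge, which is fewer than `k³` once `10 k ≥ 9 m`.
  have hsum := card_sources_le_of_forall_not_latin hno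
  have hdiagsum := sum_le_card_nsmul _ _ _ hdiag
  have hpairs : #(univ.offDiag.filter fun p : Fin 4 × Fin 4 => p.2 ≠ 0) = 9 := by decide
  rw [hpairs, smul_eq_mul] at hdiagsum
  rw [Fin.sum_univ_four, hC] at hsum
  have hcube : 729 * m ^ 3 ≤ 1000 * #M ^ 3 := by
    have := Nat.pow_le_pow_left hk 3
    ring_nf at this ⊢
    linarith
  have hsq : 90 * #M ^ 2 ≤ #M ^ 3 := by
    rw [pow_succ, mul_comm]
    exact Nat.mul_le_mul_left _ (by omega)
  linarith [hbad 0, hbad 1, hbad 2, hbad 3, pow_pos hkpos 3]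

lemma IsPartiteMatching.nine_mul_le_of_forall_not (hMX : IsPartiteMatching X R M)
    (hX : ∀ i, #(X i) = m) (hdeg : ∀ i, ∀ v ∈ X i, 1000 * #(missingLink X R i v) ≤ m ^ 3)
    (hk : #M < m) (hno : ∀ x ∈ Fintype.piFinset fun i => X i \ M.image (· i), ¬ R x) :
    9 * m ≤ 10 * #M := by
  set F := fun i => X i \ M.image (· i)
  have hF : ∀ i, #(F i) = m - #M := fun i => (hMX.card_sdiff_image i).trans (by rw [hX])
  obtain ⟨x₀, hx₀⟩ : (F 0).Nonempty := card_pos.1 (by rw [hF]; omega)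
  have hsub : Fintype.piFinset (update F 0 {x₀}) ⊆ missingLink X R 0 x₀ := by
    intro t ht
    have htF : ∀ i, t i ∈ F i := fun i => by
      rcases eq_or_ne i 0 with rfl | hi
      · simpa [mem_singleton.1 (by simpa using Fintype.mem_piFinset.1 ht 0)] using hx₀
      · simpa [hi] using Fintype.mem_piFinset.1 ht i
    refine mem_filter.2 ⟨Fintype.mem_piFinset.2 fun i => (mem_sdiff.1 (htF i)).1, ?_,
      hno t (Fintype.mem_piFinset.2 htF)⟩
    simpa using Fintype.mem_piFinset.1 ht 0
  have hcard : #(Fintype.piFinset (update F 0 {x₀})) = (m - #M) ^ 3 := by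
    simp [Fintype.card_piFinset, Fin.prod_univ_four, hF]
    ring
  have hcube : 1000 * (m - #M) ^ 3 ≤ m ^ 3 :=
    (Nat.mul_le_mul_left _ (hcard ▸ card_le_card hsub)).trans (hdeg 0 x₀ (mem_sdiff.1 hx₀).1)
  by_contra! hlt
  have := Nat.pow_lt_pow_left (show m < 10 * (m - #M) by omega) (n := 3) (by norm_num)
  rw [mul_pow] at this
  omega

lemma IsPartiteMatching.exists_card_succ (hMX : IsPartiteMatching X R M)
    (hX : ∀ i, #(X i) = m) (hm : 100 ≤ m)
    (hdeg : ∀ i, ∀ v ∈ X i, 1000 * #(missingLink X R i v) ≤ m ^ 3) (hk : #M < m) :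
    ∃ M', IsPartiteMatching X R M' ∧ #M' = #M + 1 := by
  have hfree : ∀ x ∈ Fintype.piFinset (fun i => X i \ M.image (· i)), ∀ t ∈ M, ∀ i,
      t i ≠ x i := fun x hx t ht i h =>
    (mem_sdiff.1 (Fintype.mem_piFinset.1 hx i)).2 (mem_image.2 ⟨t, ht, h⟩)
  have hxX : ∀ x ∈ Fintype.piFinset (fun i => X i \ M.image (· i)),
      x ∈ Fintype.piFinset X := fun x hx =>
    Fintype.mem_piFinset.2 fun i => (mem_sdiff.1 (Fintype.mem_piFinset.1 hx i)).1
  by_cases hedge : ∃ x ∈ Fintype.piFinset (fun i => X i \ M.image (· i)), R x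
  · obtain ⟨x, hx, hRx⟩ := hedge
    exact ⟨insert x M, isPartiteMatching_insert hMX (hxX x hx) hRx (hfree x hx),
      card_insert_of_notMem fun hxM => hfree x hx x hxM 0 rfl⟩
  · push Not at hedge
    obtain ⟨x, hx⟩ : (Fintype.piFinset fun i => X i \ M.image (· i)).Nonempty :=
      Fintype.piFinset_nonempty.2 fun i =>
        card_pos.1 (by rw [hMX.card_sdiff_image, hX]; omega)
    obtain ⟨s, hs, hinj, hR⟩ := exists_latin_sources hMX (hxX x hx) hdeg
      (hMX.nine_mul_le_of_forall_not hX hdeg hk hedge) hm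
    obtain ⟨rfl, hsM⟩ := mem_sources.1 hs
    exact ⟨latinSwap M s, isPartiteMatching_latinSwap hMX (hfree _ hx) hsM hinj (hxX _ hx) hR,
      card_latinSwap hMX.2 (hfree _ hx) hsM hinj⟩

theorem exists_isPartiteMatching_card_eq (hX : ∀ i, #(X i) = m) (hm : 100 ≤ m)
    (hdeg : ∀ i, ∀ v ∈ X i, 1000 * #(missingLink X R i v) ≤ m ^ 3) :
    ∃ M, IsPartiteMatching X R M ∧ #M = m := by
  suffices ∀ k ≤ m, ∃ M, IsPartiteMatching X R M ∧ #M = k from this m le_rfl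
  intro k hk
  induction k with
  | zero => exact ⟨∅, ⟨by simp, fun i => by simp⟩, rfl⟩
  | succ k ih =>
    obtain ⟨M, hMX, rfl⟩ := ih (by omega)
    exact hMX.exists_card_succ hX hm hdeg (by omega)

end Augmentation

section PerfectMatching

def IsPerfectMatchingOn {α : Type*} (E : Finset (Finset α)) (S : Finset α)
    (M : Finset (Finset α)) : Prop :=
  M ⊆ E ∧ (∀ e ∈ M, ∀ f ∈ M, e ≠ f → Disjoint e f) ∧ (∀ e ∈ M, e ⊆ S) ∧
    ∀ v ∈ S, ∃ e ∈ M, v ∈ e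

lemma IsPerfectMatchingOn.biUnion {α κ : Type*} [DecidableEq α] [Fintype κ]
    {E : Finset (Finset α)} {S : κ → Finset α} {M : κ → Finset (Finset α)}
    (hS : Pairwise (Disjoint on S)) (hM : ∀ k, IsPerfectMatchingOn E (S k) (M k)) :
    IsPerfectMatchingOn E (univ.biUnion S) (univ.biUnion M) := by
  simp only [IsPerfectMatchingOn, mem_biUnion, mem_univ, true_and] at hM ⊢
  refine ⟨fun e he => ?_, ?_, ?_, ?_⟩
  · obtain ⟨k, hk⟩ := mem_biUnion.1 he
    exact (hM k).1 hk.2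
  · rintro e ⟨k, he⟩ f ⟨l, hf⟩ hef
    rcases eq_or_ne k l with rfl | hkl
    · exact (hM k).2.1 e he f hf hef
    · exact (hS hkl).mono ((hM k).2.2.1 e he) ((hM l).2.2.1 f hf)
  · rintro e ⟨k, he⟩
    exact ((hM k).2.2.1 e he).trans (subset_biUnion_of_mem S (mem_univ k))
  · rintro v ⟨k, hv⟩
    obtain ⟨e, he, hve⟩ := (hM k).2.2.2 v hv
    exact ⟨e, ⟨k, he⟩, hve⟩

lemma disjoint_biUnion_of_forall_disjoint {α ι : Type*} [DecidableEq α] [Fintype ι]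
    {V Y Z : ι → Finset α}
    (hV : Pairwise (Disjoint on V)) (hY : ∀ i, Y i ⊆ V i) (hZ : ∀ i, Z i ⊆ V i)
    (h : ∀ i, Disjoint (Y i) (Z i)) : Disjoint (univ.biUnion Y) (univ.biUnion Z) := by
  refine (disjoint_biUnion_left _ _ _).2 fun i _ => (disjoint_biUnion_right _ _ _).2 fun j _ => ?_
  rcases eq_or_ne i j with rfl | hij
  · exact h i
  · exact (hV hij).mono (hY i) (hZ j)

variable {ι α : Type*} [Fintype ι] [DecidableEq ι] {Y : ι → Finset α} {t t' : ι → α}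

lemma eq_of_apply_eq_of_mem_piFinset (hY : Pairwise (Disjoint on Y))
    (ht : t ∈ Fintype.piFinset Y) (ht' : t' ∈ Fintype.piFinset Y) {i j : ι}
    (h : t i = t' j) : i = j := by
  by_contra hij
  exact disjoint_left.1 (hY hij) (Fintype.mem_piFinset.1 ht i)
    (h ▸ Fintype.mem_piFinset.1 ht' j)

variable [DecidableEq α]

lemma image_injOn_piFinset (hY : Pairwise (Disjoint on Y)) :
    Set.InjOn (fun t => univ.image t) (Fintype.piFinset Y : Set (ι → α)) := by
  intro t ht t' ht' h
  funext i
  have hi : t i ∈ univ.image t' := by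
    rw [← show univ.image t = univ.image t' from h]
    exact mem_image_of_mem t (mem_univ i)
  obtain ⟨j, -, hj⟩ := mem_image.1 hi
  obtain rfl := eq_of_apply_eq_of_mem_piFinset hY ht' ht hj
  exact hj.symm

lemma image_inter_eq_singleton {V : ι → Finset α} (hV : Pairwise (Disjoint on V))
    (ht : t ∈ Fintype.piFinset V) (i : ι) :
    univ.image t ∩ V i = {t i} := by
  ext v
  simp only [mem_inter, mem_image, mem_univ, true_and, mem_singleton]
  constructor
  · rintro ⟨⟨j, rfl⟩, hj⟩
    by_contra hji
    exact disjoint_left.1 (hV fun h => hji (congrArg t h)) (Fintype.mem_piFinset.1 ht j) hj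
  · rintro rfl
    exact ⟨⟨i, rfl⟩, Fintype.mem_piFinset.1 ht i⟩

lemma isPerfectMatchingOn_image {E : Finset (Finset α)} {M : Finset (ι → α)}
    (hY : Pairwise (Disjoint on Y)) (hMY : IsPartiteMatching Y (fun t => univ.image t ∈ E) M)
    (hcard : ∀ i, #M = #(Y i)) :
    IsPerfectMatchingOn E (univ.biUnion Y) (M.image fun t => univ.image t) := by
  have hMY' : ∀ t ∈ M, t ∈ Fintype.piFinset Y := fun t ht => (hMY.1 t ht).1
  refine ⟨fun e he => ?_, ?_, ?_, fun v hv => ?_⟩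
  · obtain ⟨t, ht, rfl⟩ := mem_image.1 he
    exact (hMY.1 t ht).2
  · rintro _ he _ hf hef
    obtain ⟨t, ht, rfl⟩ := mem_image.1 he
    obtain ⟨t', ht', rfl⟩ := mem_image.1 hf
    refine disjoint_left.2 fun v hv hv' => hef ?_
    obtain ⟨i, -, rfl⟩ := mem_image.1 hv
    obtain ⟨j, -, hj⟩ := mem_image.1 hv'
    obtain rfl := eq_of_apply_eq_of_mem_piFinset hY (hMY' t' ht') (hMY' t ht) hj
    rw [hMY.2 _ ht' ht hj]
  · intro e he
    obtain ⟨t, ht, rfl⟩ := mem_image.1 he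
    intro v hv
    obtain ⟨i, -, rfl⟩ := mem_image.1 hv
    exact mem_biUnion.2 ⟨i, mem_univ i, Fintype.mem_piFinset.1 (hMY' t ht) i⟩
  · obtain ⟨i, -, hv⟩ := mem_biUnion.1 hv
    have himage : M.image (· i) = Y i := by
      refine eq_of_subset_of_card_le (fun w hw => ?_) ?_
      · obtain ⟨t, ht, rfl⟩ := mem_image.1 hw
        exact Fintype.mem_piFinset.1 (hMY' t ht) i
      · rw [card_image_of_injOn (hMY.2 i), hcard]
    obtain ⟨t, ht, rfl⟩ := mem_image.1 (himage ▸ hv)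
    exact ⟨univ.image t, mem_image_of_mem _ ht, mem_image_of_mem t (mem_univ i)⟩

end PerfectMatching

structure IsBalancedPartition {α κ : Type*} (s : Finset α) (m : ℕ) (P : κ → Finset α) :
    Prop where
  subset : ∀ k, P k ⊆ s
  disjoint : Pairwise (Disjoint on P)
  cover : ∀ v ∈ s, ∃ k, v ∈ P k
  card : ∀ k, #(P k) = m

lemma IsBalancedPartition.comp_equiv {α κ κ' : Type*} {s : Finset α} {m : ℕ}
    {P : κ → Finset α} (hP : IsBalancedPartition s m P) (e : κ' ≃ κ) :
    IsBalancedPartition s m (P ∘ e) where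
  subset k := hP.subset (e k)
  disjoint := hP.disjoint.comp_of_injective e.injective
  cover v hv := let ⟨k, hk⟩ := hP.cover v hv; ⟨e.symm k, by simpa using hk⟩
  card k := hP.card (e k)

lemma IsBalancedPartition.notMem_of_mem {α κ : Type*} {s : Finset α} {m : ℕ}
    {P : κ → Finset α} (hP : IsBalancedPartition s m P) {j k : κ} (hkj : k ≠ j) {v : α}
    (hv : v ∈ P k) : v ∉ P j :=
  disjoint_left.1 (hP.disjoint hkj) hv

section Blocks

variable {α : Type} [DecidableEq α] {Y : Fin 4 → Finset α} {S : Finset α}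
  {H E : Finset (Finset α)}

lemma card_missingLink_le_card_nbrs_sdiff (hY : Pairwise (Disjoint on Y)) (hYS : ∀ i, Y i ⊆ S)
    (hH : ∀ t ∈ Fintype.piFinset Y, univ.image t ∈ H) (i : Fin 4) (v : α) :
    #(missingLink Y (fun t => univ.image t ∈ E) i v) ≤ #(nbrs S H v \ nbrs S E v) := by
  have hv : ∀ t ∈ missingLink Y (fun t => univ.image t ∈ E) i v, v ∈ univ.image t :=
    fun t ht => (mem_filter.1 ht).2.1 ▸ mem_image_of_mem t (mem_univ i)
  refine card_le_card_of_injOn (fun t => (univ.image t).erase v) (fun t ht => ?_) ?_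
  · obtain ⟨htY, -, htE⟩ := mem_filter.1 ht
    have hcard : #(univ.image t) = 4 := by
      rw [card_image_of_injective _ fun i j h => eq_of_apply_eq_of_mem_piFinset hY htY htY h]
      rfl
    have hsub : univ.image t ⊆ S := fun w hw => by
      obtain ⟨j, -, rfl⟩ := mem_image.1 hw
      exact hYS j (Fintype.mem_piFinset.1 htY j)
    simp only [mem_coe, nbrs, mem_sdiff, mem_filter, mem_powerset, insert_erase (hv t ht),
      card_erase_of_mem (hv t ht), hcard]
    exact ⟨⟨(erase_subset _ _).trans hsub, trivial, hH t htY⟩, fun h => htE h.2.2⟩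
  · intro t ht t' ht' h
    refine image_injOn_piFinset hY (mem_filter.1 ht).1 (mem_filter.1 ht').1 ?_
    simpa [insert_erase (hv t ht), insert_erase (hv t' ht')] using congrArg (insert v) h

theorem exists_isPerfectMatchingOn {m : ℕ} (hY : Pairwise (Disjoint on Y))
    (hYc : ∀ i, #(Y i) = m) (hm : 100 ≤ m) (hYS : ∀ i, Y i ⊆ S)
    (hH : ∀ t ∈ Fintype.piFinset Y, univ.image t ∈ H)
    (hdeg : ∀ v ∈ S, 1000 * #(nbrs S H v \ nbrs S E v) ≤ m ^ 3) :
    ∃ M, IsPerfectMatchingOn E (univ.biUnion Y) M := by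
  obtain ⟨M, hMY, hM⟩ := exists_isPartiteMatching_card_eq hYc hm fun i v hv =>
    (Nat.mul_le_mul_left _ (card_missingLink_le_card_nbrs_sdiff hY hYS hH i v)).trans
      (hdeg v (hYS i hv))
  exact ⟨_, isPerfectMatchingOn_image hY hMY fun i => hM.trans (hYc i).symm⟩

theorem exists_isPerfectMatchingOn_of_blocks {κ : Type*} [Fintype κ] {V : Fin 4 → Finset α}
    {C : Fin 4 → κ → Finset α} {m : ℕ} (hV : Pairwise (Disjoint on V))
    (hC : ∀ i, IsBalancedPartition (V i) m (C i)) (hm : 100 ≤ m)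
    (hH : ∀ k, ∀ t ∈ Fintype.piFinset fun i => C i k, univ.image t ∈ H)
    (hdeg : ∀ v ∈ univ.biUnion V,
      1000 * #(nbrs (univ.biUnion V) H v \ nbrs (univ.biUnion V) E v) ≤ m ^ 3) :
    ∃ M, IsPerfectMatchingOn E (univ.biUnion V) M := by
  have hCV : ∀ i k, C i k ⊆ univ.biUnion V := fun i k =>
    ((hC i).subset k).trans (subset_biUnion_of_mem V (mem_univ i))
  choose M hM using fun k => exists_isPerfectMatchingOn (Y := fun i => C i k)
    (fun i j hij => (hV hij).mono ((hC i).subset k) ((hC j).subset k)) (fun i => (hC i).card k)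
    hm (fun i => hCV i k) (hH k) hdeg
  obtain ⟨hME, hMdisj, -, hMcover⟩ := IsPerfectMatchingOn.biUnion (fun k l hkl =>
    disjoint_biUnion_of_forall_disjoint hV (fun i => (hC i).subset k) (fun i => (hC i).subset l)
      fun i => (hC i).disjoint hkl) hM
  refine ⟨_, hME, hMdisj, fun e he => ?_, fun v hv => hMcover v ?_⟩
  · obtain ⟨k, -, he⟩ := mem_biUnion.1 he
    exact ((hM k).2.2.1 e he).trans (biUnion_subset.2 fun i _ => hCV i k)
  · obtain ⟨i, -, hv⟩ := mem_biUnion.1 hv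
    obtain ⟨k, hk⟩ := (hC i).cover v hv
    exact mem_biUnion.2 ⟨k, mem_univ k, mem_biUnion.2 ⟨i, mem_univ i, hk⟩⟩

end Blocks

section H13

variable {α : Type} [DecidableEq α]

lemma pairwise_disjoint_vecCons {β : Type*} [PartialOrder β] [OrderBot β] {a b c d : β}
    (hab : Disjoint a b) (hac : Disjoint a c) (had : Disjoint a d) (hbc : Disjoint b c)
    (hbd : Disjoint b d) (hcd : Disjoint c d) : Pairwise (Disjoint on ![a, b, c, d]) := by
  intro i j hij
  fin_cases i <;> fin_cases j <;>
    first | exact absurd rfl hij | assumption | exact Disjoint.symm ‹_›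

lemma biUnion_vecCons_four (V1 V2 V3 V4 : Finset α) :
    univ.biUnion ![V1, V2, V3, V4] = V1 ∪ V2 ∪ V3 ∪ V4 := by
  ext v
  simp [Fin.exists_fin_succ]

lemma exists_disjoint_union_eq (s : Finset α) {a b : ℕ} (h : #s = a + b) :
    ∃ P Q, Disjoint P Q ∧ P ∪ Q = s ∧ #P = a ∧ #Q = b := by
  obtain ⟨P, hP, hPc⟩ := exists_subset_card_eq (show a ≤ #s by omega)
  exact ⟨P, s \ P, disjoint_sdiff, union_sdiff_of_subset hP, hPc,
    by rw [card_sdiff_of_subset hP]; omega⟩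

lemma exists_isBalancedPartition_apply_eq {s W : Finset α} {m : ℕ} (hs : #s = 3 * m)
    (hW : W ⊆ s) (hWc : #W = m) (j : Fin 3) :
    ∃ P : Fin 3 → Finset α, IsBalancedPartition s m P ∧ P j = W := by
  obtain ⟨Q, R, hQR, hU, hQ, hR⟩ := exists_disjoint_union_eq (s \ W) (a := m) (b := m)
    (by rw [card_sdiff_of_subset hW]; omega)
  have hQs : Q ⊆ s \ W := hU ▸ subset_union_left
  have hRs : R ⊆ s \ W := hU ▸ subset_union_right
  have hWQ : Disjoint W Q := disjoint_sdiff.mono_right hQs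
  have hWR : Disjoint W R := disjoint_sdiff.mono_right hRs
  have hP : IsBalancedPartition s m ![W, Q, R] := by
    refine ⟨fun k => ?_, fun k l hkl => ?_, fun v hv => ?_, fun k => ?_⟩
    · fin_cases k
      exacts [hW, hQs.trans sdiff_subset, hRs.trans sdiff_subset]
    · fin_cases k <;> fin_cases l <;>
        first | exact absurd rfl hkl | assumption | exact Disjoint.symm ‹_›
    · by_cases hvW : v ∈ W
      · exact ⟨0, hvW⟩
      · rcases mem_union.1 (hU ▸ mem_sdiff.2 ⟨hv, hvW⟩ : v ∈ Q ∪ R) with h | h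
        exacts [⟨1, h⟩, ⟨2, h⟩]
    · fin_cases k
      exacts [hWc, hQ, hR]
  exact ⟨_, hP.comp_equiv (Equiv.swap j 0), by simp⟩

lemma image_mem_H13edges {V1 V2 V3 V4 W2 W3 W4 : Finset α} {t : Fin 4 → α}
    (hV : Pairwise (Disjoint on ![V1, V2, V3, V4]))
    (ht : t ∈ Fintype.piFinset ![V1, V2, V3, V4])
    (hW : t 1 ∈ W2 ∨ t 2 ∈ W3 ∨ t 3 ∈ W4) (hU : t 1 ∉ W2 ∨ t 2 ∉ W3 ∨ t 3 ∉ W4) :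
    univ.image t ∈ H13edges V1 V2 V3 V4 W2 W3 W4 := by
  have htV : t 0 ∈ V1 ∧ t 1 ∈ V2 ∧ t 2 ∈ V3 ∧ t 3 ∈ V4 := by
    simpa [Fin.forall_fin_succ] using Fintype.mem_piFinset.1 ht
  have hmem : ∀ i, t i ∈ univ.image t := fun i => mem_image_of_mem t (mem_univ i)
  have h1 : univ.image t ∩ V1 = {t 0} := image_inter_eq_singleton hV ht 0
  have h2 : univ.image t ∩ V2 = {t 1} := image_inter_eq_singleton hV ht 1
  have h3 : univ.image t ∩ V3 = {t 2} := image_inter_eq_singleton hV ht 2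
  have h4 : univ.image t ∩ V4 = {t 3} := image_inter_eq_singleton hV ht 3
  refine mem_filter.2 ⟨mem_powerset.2 fun v hv => ?_, by simp [h1], by simp [h2],
    by simp [h3], by simp [h4], ?_, ?_⟩
  · obtain ⟨i, -, rfl⟩ := mem_image.1 hv
    fin_cases i <;> simp [htV]
  · rcases hW with h | h | h
    exacts [⟨t 1, mem_inter.2 ⟨hmem 1, by simp [h]⟩⟩, ⟨t 2, mem_inter.2 ⟨hmem 2, by simp [h]⟩⟩,
      ⟨t 3, mem_inter.2 ⟨hmem 3, by simp [h]⟩⟩]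
  · rcases hU with h | h | h
    exacts [⟨t 1, mem_inter.2 ⟨hmem 1, by simp [h, htV]⟩⟩,
      ⟨t 2, mem_inter.2 ⟨hmem 2, by simp [h, htV]⟩⟩, ⟨t 3, mem_inter.2 ⟨hmem 3, by simp [h, htV]⟩⟩]

lemma exists_H13edges_columns {m : ℕ} {V1 V2 V3 V4 W2 W3 W4 : Finset α}
    (hV : Pairwise (Disjoint on ![V1, V2, V3, V4]))
    (hV1 : #V1 = 3 * m) (hV2 : #V2 = 3 * m) (hV3 : #V3 = 3 * m) (hV4 : #V4 = 3 * m)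
    (hW2 : W2 ⊆ V2) (hW3 : W3 ⊆ V3) (hW4 : W4 ⊆ V4)
    (hW2c : #W2 = m) (hW3c : #W3 = m) (hW4c : #W4 = m) :
    ∃ C : Fin 4 → Fin 3 → Finset α, (∀ i, IsBalancedPartition (![V1, V2, V3, V4] i) m (C i)) ∧
      ∀ k, ∀ t ∈ Fintype.piFinset fun i => C i k,
        univ.image t ∈ H13edges V1 V2 V3 V4 W2 W3 W4 := by
  obtain ⟨A, hA, hAc⟩ := exists_subset_card_eq (show m ≤ #V1 by omega)
  obtain ⟨P1, hP1, -⟩ := exists_isBalancedPartition_apply_eq hV1 hA hAc 0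
  obtain ⟨P2, hP2, rfl⟩ := exists_isBalancedPartition_apply_eq hV2 hW2 hW2c 0
  obtain ⟨P3, hP3, rfl⟩ := exists_isBalancedPartition_apply_eq hV3 hW3 hW3c 1
  obtain ⟨P4, hP4, rfl⟩ := exists_isBalancedPartition_apply_eq hV4 hW4 hW4c 2
  refine ⟨![P1, P2, P3, P4], fun i => by fin_cases i; exacts [hP1, hP2, hP3, hP4],
    fun k t ht => ?_⟩
  have htP : t 0 ∈ P1 k ∧ t 1 ∈ P2 k ∧ t 2 ∈ P3 k ∧ t 3 ∈ P4 k := by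
    simpa [Fin.forall_fin_succ] using Fintype.mem_piFinset.1 ht
  have htV : t ∈ Fintype.piFinset ![V1, V2, V3, V4] := by
    simpa [Fin.forall_fin_succ] using ⟨hP1.subset k htP.1, hP2.subset k htP.2.1,
      hP3.subset k htP.2.2.1, hP4.subset k htP.2.2.2⟩
  fin_cases k
  · exact image_mem_H13edges hV htV (Or.inl htP.2.1)
      (Or.inr (Or.inl (hP3.notMem_of_mem (by decide) htP.2.2.1)))
  · exact image_mem_H13edges hV htV (Or.inr (Or.inl htP.2.2.1))
      (Or.inl (hP2.notMem_of_mem (by decide) htP.2.1))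
  · exact image_mem_H13edges hV htV (Or.inr (Or.inr htP.2.2.2))
      (Or.inl (hP2.notMem_of_mem (by decide) htP.2.1))

lemma thousand_mul_le_cube {a : ℝ} {c m : ℕ} (ha : a ≤ 1 / 27000)
    (hc : (c : ℝ) ≤ a * ((3 * m : ℕ) : ℝ) ^ 3) : 1000 * c ≤ m ^ 3 := by
  have h : a * ((3 * m : ℕ) : ℝ) ^ 3 ≤ 1 / 27000 * ((3 * m : ℕ) : ℝ) ^ 3 :=
    mul_le_mul_of_nonneg_right ha (by positivity)
  push_cast at h hc
  exact_mod_cast (show (1000 * c : ℝ) ≤ m ^ 3 by nlinarith)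

end H13

end PartiteHypergraph

open PartiteHypergraph

/-- For every sufficiently small `α > 0` there is `n0` such that for all
`n ≥ n0` divisible by `3`: if `H` is a 4-partite 4-graph with classes of size
`n` and every vertex of `H` is `α`-good with respect to `H'₁,₃(n)` (for a fixed
choice of the partition sets `Wi`), then `H` has a perfect matching. -/
theorem good_vertices_perfect_matching :
    ∃ a0 : ℝ, 0 < a0 ∧ ∀ a : ℝ, 0 < a → a < a0 →
    ∃ n0 : ℕ, ∀ n : ℕ, n0 ≤ n → 3 ∣ n →
    ∀ (α : Type) [DecidableEq α], ∀ V1 V2 V3 V4 W2 W3 W4 : Finset α,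
      Disjoint V1 V2 → Disjoint V1 V3 → Disjoint V1 V4 →
      Disjoint V2 V3 → Disjoint V2 V4 → Disjoint V3 V4 →
      V1.card = n → V2.card = n → V3.card = n → V4.card = n →
      W2 ⊆ V2 → W3 ⊆ V3 → W4 ⊆ V4 →
      W2.card = n / 3 → W3.card = n / 3 → W4.card = n / 3 →
      ∀ E : Finset (Finset α),
        IsPartite4 V1 V2 V3 V4 E →
        (∀ v ∈ V1 ∪ V2 ∪ V3 ∪ V4,
          ((nbrs (V1 ∪ V2 ∪ V3 ∪ V4) (H13edges V1 V2 V3 V4 W2 W3 W4) v \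
              nbrs (V1 ∪ V2 ∪ V3 ∪ V4) E v).card : ℝ) ≤ a * n ^ 3) →
        ∃ M : Finset (Finset α),
          M ⊆ E ∧
          (∀ e ∈ M, ∀ f ∈ M, e ≠ f → Disjoint e f) ∧
          (∀ v ∈ V1 ∪ V2 ∪ V3 ∪ V4, ∃ e ∈ M, v ∈ e) := by
  refine ⟨1 / 27000, by norm_num, fun a _ ha => ⟨300, ?_⟩⟩
  rintro n hn ⟨m, rfl⟩ α _ V1 V2 V3 V4 W2 W3 W4 d12 d13 d14 d23 d24 d34 hV1 hV2 hV3 hV4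
    hW2 hW3 hW4 hW2c hW3c hW4c E - hgood
  have hV := pairwise_disjoint_vecCons d12 d13 d14 d23 d24 d34
  obtain ⟨C, hC, hH⟩ := exists_H13edges_columns hV hV1 hV2 hV3 hV4 hW2 hW3 hW4
    (by omega) (by omega) (by omega)
  rw [← biUnion_vecCons_four] at hgood ⊢
  obtain ⟨M, hME, hMdisj, -, hMcover⟩ := exists_isPerfectMatchingOn_of_blocks hV hC
    (by omega) hH fun v hv => thousand_mul_le_cube ha.le (hgood v hv)
  exact ⟨M, hME, hMdisj, hMcover⟩
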